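/- arXiv:0809.2494 — 12 statements merged into one kernel-verified Lean document; each statement's English description precedes it below -/
import Mathlib

section
/- For all natural numbers m and n and every monotone function f : Fin m → Fin n, setting k = m + n − (cardinality of the image of f), there exist a unique monotone injective function g : Fin m → Fin k and a unique monotone surjective function h : Fin k → Fin n such that f = h ∘ g. -/
/-!
Existence: list in lexicographic order the points `(f a, a)` of the graph of `f` together with
one point `(b, ⊥)` for every `b` missed by `f`. There are `m + n - |image f|` of them; `g` sends
`a` to the position of `(f a, a)` and `h` reads off the first coordinate.

Uniqueness: for any factorization, `g` together with a section of `h` embeds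
`{a | P (f a)} ⊔ {b ∉ image f | P b}` into `{c | P (h c)}`. Applied to `P` and `¬P`, a count
shows that these embeddings are bijective. Taking `P = (· < b)` pins down the monotone `h`;
taking `P = (· ∈ image f)` shows that the range of `g` is `h ⁻¹' range f`, which pins down the
strictly monotone `g`.
-/

open Finset Function

section Counting

variable {α β γ : Type*} [Fintype α] [Fintype β] [Fintype γ] [DecidableEq β]
  {f : α → β} {g : α → γ} {h : γ → β}

theorem card_filter_comp_add_card_filter_compl_image_le (hg : Injective g) (hhs : Surjective h)
    (hf : h ∘ g = f) (P : β → Prop) [DecidablePred P] :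
    #{a | P (f a)} + #{b ∈ (univ.image f)ᶜ | P b} ≤ #{c | P (h c)} := by
  subst hf
  rw [← card_disjSum]
  refine card_le_card_of_injOn (Sum.elim g (surjInv hhs)) ?_ ?_
  · rintro (a | b) hab <;> simp_all [surjInv_eq hhs]
  · rintro (a | b) hab (a' | b') hab' heq <;>
      simp only [Sum.elim_inl, Sum.elim_inr, mem_coe, inl_mem_disjSum, inr_mem_disjSum,
        mem_filter, mem_compl, mem_image, mem_univ, true_and, not_exists] at heq hab hab'
    · rw [hg heq]
    · exact absurd (by rw [comp_apply, heq, surjInv_eq hhs]) (hab'.1 a)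
    · exact absurd (by rw [comp_apply, ← heq, surjInv_eq hhs]) (hab.1 a')
    · rw [injective_surjInv hhs heq]

theorem card_filter_comp_eq (hg : Injective g) (hhs : Surjective h) (hf : h ∘ g = f)
    (hcard : Fintype.card γ = Fintype.card α + #(univ.image f)ᶜ) (P : β → Prop) [DecidablePred P] :
    #{c | P (h c)} = #{a | P (f a)} + #{b ∈ (univ.image f)ᶜ | P b} := by
  have hP := card_filter_comp_add_card_filter_compl_image_le hg hhs hf P
  have hnotP := card_filter_comp_add_card_filter_compl_image_le hg hhs hf (¬P ·)
  have hγ : #{c | P (h c)} + #{c | ¬P (h c)} = Fintype.card γ :=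
    card_filter_add_card_filter_not _
  have hα : #{a | P (f a)} + #{a | ¬P (f a)} = Fintype.card α :=
    card_filter_add_card_filter_not _
  have hβ : #{b ∈ (univ.image f)ᶜ | P b} + #{b ∈ (univ.image f)ᶜ | ¬P b} = #(univ.image f)ᶜ :=
    card_filter_add_card_filter_not _
  omega

theorem range_eq_preimage_range (hg : Injective g) (hhs : Surjective h) (hf : h ∘ g = f)
    (hcard : Fintype.card γ = Fintype.card α + #(univ.image f)ᶜ) :
    Set.range g = h ⁻¹' Set.range f := by
  classical
  have himage : univ.image g = ({c | h c ∈ univ.image f} : Finset γ) := by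
    refine eq_of_subset_of_card_le ?_ ?_
    · rintro _ hc
      obtain ⟨a, -, rfl⟩ := mem_image.mp hc
      simp [← hf]
    · rw [card_filter_comp_eq hg hhs hf hcard (· ∈ univ.image f), card_image_of_injective _ hg]
      simp
  simpa [Set.ext_iff, Finset.ext_iff] using himage

end Counting

theorem Monotone.eq_of_forall_card_filter_lt_eq {α β : Type*} [Fintype α] [LinearOrder α]
    [LinearOrder β] {h h' : α → β} (hh : Monotone h) (hh' : Monotone h')
    (H : ∀ b, #{a | h a < b} = #{a | h' a < b}) : h = h' := by
  suffices key : ∀ {h h' : α → β}, Monotone h → Monotone h' →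
      (∀ b, #{a | h a < b} = #{a | h' a < b}) → ∀ x, h' x ≤ h x from
    funext fun x ↦ le_antisymm (key hh' hh (fun b ↦ (H b).symm) x) (key hh hh' H x)
  intro h h' hh hh' H x
  by_contra! hlt
  have h'_lt : #{a | h' a < h' x} ≤ #{a | a < x} :=
    card_le_card fun a ↦ by simpa using mt (@hh' x a)
  have lt_le : #{a | a < x} < #{a | a ≤ x} :=
    card_lt_card <| (ssubset_iff_of_subset fun a ↦ by simpa using le_of_lt).mpr ⟨x, by simp⟩
  have le_h : #{a | a ≤ x} ≤ #{a | h a < h' x} :=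
    card_le_card fun a ha ↦ by simpa using (hh (mem_filter.mp ha).2).trans_lt hlt
  have := H (h' x)
  omega

section Construction

variable {α β : Type*} [Fintype α] [LinearOrder α] [Fintype β] [LinearOrder β] (f : α → β)

def paddedGraph : Finset (β ×ₗ WithBot α) :=
  univ.image (fun a ↦ toLex (f a, (a : WithBot α))) ∪ (univ.image f)ᶜ.image (fun b ↦ toLex (b, ⊥))

theorem card_paddedGraph : #(paddedGraph f) = Fintype.card α + #(univ.image f)ᶜ := by
  rw [paddedGraph, card_union_of_disjoint, card_image_of_injective, card_image_of_injective,
    card_univ]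
  · intro b b' hbb'
    simpa using hbb'
  · intro a a' haa'
    simpa using (Prod.ext_iff.mp (toLex.injective haa')).2
  · simp [disjoint_left]

theorem exists_strictMono_monotone_surjective_comp_eq (hf : Monotone f) {k : ℕ}
    (hk : Fintype.card α + #(univ.image f)ᶜ = k) :
    ∃ (g : α → Fin k) (h : Fin k → β), StrictMono g ∧ Monotone h ∧ Surjective h ∧ h ∘ g = f := by
  let e := (paddedGraph f).orderIsoOfFin ((card_paddedGraph f).trans hk)
  have mem_graph (a : α) : toLex (f a, (a : WithBot α)) ∈ paddedGraph f := by simp [paddedGraph]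
  have mem_gap (b : β) (hb : b ∉ univ.image f) : toLex (b, (⊥ : WithBot α)) ∈ paddedGraph f := by
    simp_all [paddedGraph]
  let g (a : α) : Fin k := e.symm ⟨_, mem_graph a⟩
  let h (x : Fin k) : β := (ofLex (e x : β ×ₗ WithBot α)).1
  have hgh : h ∘ g = f := by
    funext a
    simp [g, h]
  refine ⟨g, h, fun a a' haa' ↦ e.symm.strictMono ?_, ?_, fun b ↦ ?_, hgh⟩
  · exact Prod.Lex.toLex_strictMono (Prod.mk_lt_mk_of_le_of_lt (hf haa'.le) (by simpa))
  · exact Prod.Lex.monotone_fst_ofLex.comp ((Subtype.mono_coe _).comp e.monotone)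
  · by_cases hb : b ∈ univ.image f
    · obtain ⟨a, -, rfl⟩ := mem_image.mp hb
      exact ⟨g a, congrFun hgh a⟩
    · exact ⟨e.symm ⟨_, mem_gap b hb⟩, by simp [h]⟩

end Construction

theorem eq_of_strictMono_monotone_surjective_comp_eq {α β γ : Type*} [Fintype α] [LinearOrder α]
    [Fintype β] [LinearOrder β] [Fintype γ] [LinearOrder γ] {f : α → β} {g g' : α → γ}
    {h h' : γ → β} (hg : StrictMono g) (hg' : StrictMono g') (hh : Monotone h)
    (hh' : Monotone h') (hhs : Surjective h) (hhs' : Surjective h') (hf : h ∘ g = f)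
    (hf' : h' ∘ g' = f) (hcard : Fintype.card γ = Fintype.card α + #(univ.image f)ᶜ) :
    g = g' ∧ h = h' := by
  obtain rfl : h = h' := hh.eq_of_forall_card_filter_lt_eq hh' fun b ↦ by
    rw [card_filter_comp_eq hg.injective hhs hf hcard (· < b),
      card_filter_comp_eq hg'.injective hhs' hf' hcard (· < b)]
  refine ⟨(hg.range_inj hg').mp ?_, rfl⟩
  rw [range_eq_preimage_range hg.injective hhs hf hcard,
    range_eq_preimage_range hg'.injective hhs hf' hcard]

/-- The injection-surjection decomposition of order-preserving functions between
finite ordinals: every monotone `f : Fin m → Fin n` factors uniquely as a monotone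
injection into `Fin (m + n - |image f|)` followed by a monotone surjection. -/
theorem injection_surjection_decomposition (m n : ℕ) (f : Fin m → Fin n) (hf : Monotone f) :
    ∃! p : (Fin m → Fin (m + n - (Finset.univ.image f).card)) ×
           (Fin (m + n - (Finset.univ.image f).card) → Fin n),
      Monotone p.1 ∧ Function.Injective p.1 ∧
      Monotone p.2 ∧ Function.Surjective p.2 ∧ f = p.2 ∘ p.1 := by
  have hk : Fintype.card (Fin m) + #(univ.image f)ᶜ = m + n - #(univ.image f) := by
    have := card_le_univ (univ.image f)
    rw [card_compl, Fintype.card_fin, Fintype.card_fin] at *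
    omega
  obtain ⟨g, h, hg, hh, hhs, hgh⟩ := exists_strictMono_monotone_surjective_comp_eq f hf hk
  refine ⟨(g, h), ⟨hg.monotone, hg.injective, hh, hhs, hgh.symm⟩, ?_⟩
  rintro ⟨g', h'⟩ ⟨hg'_mono, hg'_inj, hh', hhs', hf'⟩
  obtain ⟨rfl, rfl⟩ := eq_of_strictMono_monotone_surjective_comp_eq
    (hg'_mono.strictMono_of_injective hg'_inj) hg hh' hh hhs' hhs hf'.symm hgh
    (by rw [Fintype.card_fin, hk])
  rfl
end

section
/- In every dyad on a category C, for every object A the equation (δ^{□M}) for M = ◇ holds: □δ^{□◇}_A ∘ δ^{□◇}_A = δ^{□□}_{◇A} ∘ δ^{□◇}_A. -/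
open CategoryTheory

universe v u

/-- A dyad on a category `C` (Došen–Petrić): a comonad `(□, ε^□, δ^{□□})`, a monad
`(◇, ε^◇, δ^{◇◇})`, and natural transformations `δ^{□◇} : ◇ ⟶ □◇` and
`δ^{◇□} : ◇□ ⟶ □` satisfying the equations (□◇β), (◇□β), (δN) and (δI)
for `M` each of `□`, `◇`.  (Composition `g ∘ f` of the paper is `f ≫ g` here.) -/
structure Dyad (C : Type u) [Category.{v} C] where
  /-- the endofunctor `□` -/
  box : C ⥤ C
  /-- the endofunctor `◇` -/
  dia : C ⥤ C
  /-- `ε^□ : □ ⟶ Id` -/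
  εbox : box ⟶ 𝟭 C
  /-- `δ^{□□} : □ ⟶ □□` -/
  δbb : box ⟶ box ⋙ box
  /-- `ε^◇ : Id ⟶ ◇` -/
  εdia : 𝟭 C ⟶ dia
  /-- `δ^{◇◇} : ◇◇ ⟶ ◇` -/
  δdd : dia ⋙ dia ⟶ dia
  /-- `δ^{□◇} : ◇ ⟶ □◇` -/
  δbd : dia ⟶ dia ⋙ box
  /-- `δ^{◇□} : ◇□ ⟶ □` -/
  δdb : box ⋙ dia ⟶ box
  /-- `ε^□_{□A} ∘ δ^{□□}_A = id` -/
  box_counit_right : ∀ A : C, δbb.app A ≫ εbox.app (box.obj A) = 𝟙 (box.obj A)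
  /-- `□ε^□_A ∘ δ^{□□}_A = id` -/
  box_counit_left : ∀ A : C, δbb.app A ≫ box.map (εbox.app A) = 𝟙 (box.obj A)
  /-- `□δ^{□□}_A ∘ δ^{□□}_A = δ^{□□}_{□A} ∘ δ^{□□}_A` -/
  box_coassoc : ∀ A : C, δbb.app A ≫ box.map (δbb.app A) = δbb.app A ≫ δbb.app (box.obj A)
  /-- `δ^{◇◇}_A ∘ ε^◇_{◇A} = id` -/
  dia_unit_right : ∀ A : C, εdia.app (dia.obj A) ≫ δdd.app A = 𝟙 (dia.obj A)
  /-- `δ^{◇◇}_A ∘ ◇ε^◇_A = id` -/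
  dia_unit_left : ∀ A : C, dia.map (εdia.app A) ≫ δdd.app A = 𝟙 (dia.obj A)
  /-- `δ^{◇◇}_A ∘ ◇δ^{◇◇}_A = δ^{◇◇}_A ∘ δ^{◇◇}_{◇A}` -/
  dia_assoc : ∀ A : C, dia.map (δdd.app A) ≫ δdd.app A = δdd.app (dia.obj A) ≫ δdd.app A
  /-- `(□◇β)`: `ε^□_{◇A} ∘ δ^{□◇}_A = id_{◇A}` -/
  bd_beta : ∀ A : C, δbd.app A ≫ εbox.app (dia.obj A) = 𝟙 (dia.obj A)
  /-- `(◇□β)`: `δ^{◇□}_A ∘ ε^◇_{□A} = id_{□A}` -/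
  db_beta : ∀ A : C, εdia.app (box.obj A) ≫ δdb.app A = 𝟙 (box.obj A)
  /-- `(δN)` for `M = □`: `□δ^{◇□}_A ∘ δ^{□◇}_{□A} = δ^{□□}_A ∘ δ^{◇□}_A` -/
  δN_box : ∀ A : C, δbd.app (box.obj A) ≫ box.map (δdb.app A) = δdb.app A ≫ δbb.app A
  /-- `(δN)` for `M = ◇`: `□δ^{◇◇}_A ∘ δ^{□◇}_{◇A} = δ^{□◇}_A ∘ δ^{◇◇}_A` -/
  δN_dia : ∀ A : C, δbd.app (dia.obj A) ≫ box.map (δdd.app A) = δdd.app A ≫ δbd.app A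
  /-- `(δI)` for `M = □`: `δ^{◇□}_{□A} ∘ ◇δ^{□□}_A = δ^{□□}_A ∘ δ^{◇□}_A` -/
  δI_box : ∀ A : C, dia.map (δbb.app A) ≫ δdb.app (box.obj A) = δdb.app A ≫ δbb.app A
  /-- `(δI)` for `M = ◇`: `δ^{◇□}_{◇A} ∘ ◇δ^{□◇}_A = δ^{□◇}_A ∘ δ^{◇◇}_A` -/
  δI_dia : ∀ A : C, dia.map (δbd.app A) ≫ δdb.app (dia.obj A) = δdd.app A ≫ δbd.app A

/-- In every dyad the derived equation `(δ^{□M})` for `M = ◇` holds: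
`□δ^{□◇}_A ∘ δ^{□◇}_A = δ^{□□}_{◇A} ∘ δ^{□◇}_A`. -/
theorem Dyad.delta_box_dia {C : Type u} [Category.{v} C] (D : Dyad C) (A : C) :
    D.δbd.app A ≫ D.box.map (D.δbd.app A) = D.δbd.app A ≫ D.δbb.app (D.dia.obj A) := by
  have h1 : D.δbb.app (D.dia.obj A) =
      D.εdia.app (D.box.obj (D.dia.obj A)) ≫ D.δbd.app (D.box.obj (D.dia.obj A)) ≫
        D.box.map (D.δdb.app (D.dia.obj A)) := by
    rw [D.δN_box, ← Category.assoc, D.db_beta]; simp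
  rw [h1]; symm
  have h2 := D.εdia.naturality (D.δbd.app A)
  simp only [Functor.id_map, Functor.comp_obj] at h2
  have h3 := D.δbd.naturality (D.δbd.app A)
  simp only [Functor.comp_map, Functor.comp_obj] at h3
  calc D.δbd.app A ≫ D.εdia.app (D.box.obj (D.dia.obj A)) ≫
        D.δbd.app (D.box.obj (D.dia.obj A)) ≫ D.box.map (D.δdb.app (D.dia.obj A))
      = D.εdia.app (D.dia.obj A) ≫ (D.dia.map (D.δbd.app A) ≫
          D.δbd.app (D.box.obj (D.dia.obj A))) ≫ D.box.map (D.δdb.app (D.dia.obj A)) := by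
        rw [← Category.assoc, h2]; simp only [Category.assoc]
    _ = D.εdia.app (D.dia.obj A) ≫ D.δbd.app (D.dia.obj A) ≫
          D.box.map (D.dia.map (D.δbd.app A) ≫ D.δdb.app (D.dia.obj A)) := by
        rw [h3]; simp only [Category.assoc, Functor.map_comp]
    _ = D.εdia.app (D.dia.obj A) ≫ D.δbd.app (D.dia.obj A) ≫
          D.box.map (D.δdd.app A) ≫ D.box.map (D.δbd.app A) := by
        rw [D.δI_dia, Functor.map_comp]
    _ = D.εdia.app (D.dia.obj A) ≫ (D.δdd.app A ≫ D.δbd.app A) ≫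
          D.box.map (D.δbd.app A) := by
        rw [← D.δN_dia]; simp only [Category.assoc]
    _ = D.δbd.app A ≫ D.box.map (D.δbd.app A) := by
        rw [← Category.assoc, ← Category.assoc, D.dia_unit_right]; simp
end

section
/- In every dyad on a category C, for every object A the equation (δ^{◇M}) for M = □ holds: δ^{◇□}_A ∘ ◇δ^{◇□}_A = δ^{◇□}_A ∘ δ^{◇◇}_{□A}. -/
open CategoryTheory

universe v u

/-- In every dyad the derived equation `(δ^{◇M})` for `M = □` holds:
`δ^{◇□}_A ∘ ◇δ^{◇□}_A = δ^{◇□}_A ∘ δ^{◇◇}_{□A}`. -/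
theorem Dyad.delta_dia_box {C : Type u} [Category.{v} C] (D : Dyad C) (A : C) :
    D.dia.map (D.δdb.app A) ≫ D.δdb.app A = D.δdd.app (D.box.obj A) ≫ D.δdb.app A := by
  have nat : D.dia.map (D.box.map (D.δdb.app A)) ≫ D.δdb.app (D.box.obj A)
      = D.δdb.app ((D.box ⋙ D.dia).obj A) ≫ D.box.map (D.δdb.app A) := by
    simpa using D.δdb.naturality (D.δdb.app A)
  calc
    D.dia.map (D.δdb.app A) ≫ D.δdb.app A
        = D.dia.map (D.δdb.app A) ≫ (D.δdb.app A ≫ D.δbb.app A) ≫ D.box.map (D.εbox.app A) := by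
          rw [Category.assoc, D.box_counit_left, Category.comp_id]
    _ = D.dia.map (D.δdb.app A) ≫ (D.dia.map (D.δbb.app A) ≫ D.δdb.app (D.box.obj A))
          ≫ D.box.map (D.εbox.app A) := by rw [D.δI_box]
    _ = D.dia.map (D.δdb.app A ≫ D.δbb.app A) ≫ D.δdb.app (D.box.obj A)
          ≫ D.box.map (D.εbox.app A) := by simp
    _ = D.dia.map (D.δbd.app (D.box.obj A) ≫ D.box.map (D.δdb.app A)) ≫ D.δdb.app (D.box.obj A)
          ≫ D.box.map (D.εbox.app A) := by rw [D.δN_box]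
    _ = D.dia.map (D.δbd.app (D.box.obj A)) ≫ (D.dia.map (D.box.map (D.δdb.app A))
          ≫ D.δdb.app (D.box.obj A)) ≫ D.box.map (D.εbox.app A) := by simp
    _ = D.dia.map (D.δbd.app (D.box.obj A)) ≫ (D.δdb.app ((D.box ⋙ D.dia).obj A)
          ≫ D.box.map (D.δdb.app A)) ≫ D.box.map (D.εbox.app A) := by rw [nat]
    _ = (D.dia.map (D.δbd.app (D.box.obj A)) ≫ D.δdb.app (D.dia.obj (D.box.obj A)))
          ≫ D.box.map (D.δdb.app A) ≫ D.box.map (D.εbox.app A) := by simp [Functor.comp_obj]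
    _ = D.δdd.app (D.box.obj A) ≫ D.δbd.app (D.box.obj A)
          ≫ D.box.map (D.δdb.app A) ≫ D.box.map (D.εbox.app A) := by
          rw [D.δI_dia (D.box.obj A)]; simp
    _ = D.δdd.app (D.box.obj A) ≫ (D.δbd.app (D.box.obj A) ≫ D.box.map (D.δdb.app A))
          ≫ D.box.map (D.εbox.app A) := by simp
    _ = D.δdd.app (D.box.obj A) ≫ (D.δdb.app A ≫ D.δbb.app A) ≫ D.box.map (D.εbox.app A) := by
          rw [D.δN_box]
    _ = D.δdd.app (D.box.obj A) ≫ D.δdb.app A := by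
          rw [Category.assoc, D.box_counit_left, Category.comp_id]
end

section
/- In every dyad on a category C, for every object A the comultiplication δ^{□□} is definable from the other data: δ^{□□}_A = □δ^{◇□}_A ∘ δ^{□◇}_{□A} ∘ ε^◇_{□A}. -/
open CategoryTheory

universe v u

/-- In every dyad the comultiplication `δ^{□□}` is definable from the other data:
`δ^{□□}_A = □δ^{◇□}_A ∘ δ^{□◇}_{□A} ∘ ε^◇_{□A}`. -/
theorem Dyad.delta_bb_definable {C : Type u} [Category.{v} C] (D : Dyad C) (A : C) :
    D.δbb.app A =
      D.εdia.app (D.box.obj A) ≫ D.δbd.app (D.box.obj A) ≫ D.box.map (D.δdb.app A) := by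
  rw [D.δN_box A, ← Category.assoc, D.db_beta A]; simp
end

section
/- In every dyad on a category C, for every object A the multiplication δ^{◇◇} is definable from the other data: δ^{◇◇}_A = ε^□_{◇A} ∘ δ^{◇□}_{◇A} ∘ ◇δ^{□◇}_A. -/
open CategoryTheory

universe v u

/-- In every dyad the multiplication `δ^{◇◇}` is definable from the other data:
`δ^{◇◇}_A = ε^□_{◇A} ∘ δ^{◇□}_{◇A} ∘ ◇δ^{□◇}_A`. -/
theorem Dyad.delta_dd_definable {C : Type u} [Category.{v} C] (D : Dyad C) (A : C) :
    D.δdd.app A =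
      D.dia.map (D.δbd.app A) ≫ D.δdb.app (D.dia.obj A) ≫ D.εbox.app (D.dia.obj A) := by
  rw [← Category.assoc, D.δI_dia, Category.assoc, D.bd_beta, Category.comp_id]
end

section
/- In every dyad on a category C, the endofunctor ◇ is left adjoint to the endofunctor □: the families η_A = δ^{□◇}_A ∘ ε^◇_A : A ⟶ □◇A and ϵ_A = ε^□_A ∘ δ^{◇□}_A : ◇□A ⟶ A are natural and satisfy the triangle identities ϵ_{◇A} ∘ ◇η_A = id_{◇A} and □ϵ_A ∘ η_{□A} = id_{□A} for every object A, so they are the unit and counit of an adjunction ◇ ⊣ □. -/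
open CategoryTheory

universe v u

/-- In every dyad, `◇` is left adjoint to `□`: the families
`η_A = δ^{□◇}_A ∘ ε^◇_A` and `ϵ_A = ε^□_A ∘ δ^{◇□}_A` are natural, satisfy the
triangle identities, and are the unit and counit of an adjunction `◇ ⊣ □`. -/
theorem Dyad.dia_leftAdjoint_box {C : Type u} [Category.{v} C] (D : Dyad C) :
    (∀ {A B : C} (f : A ⟶ B),
      f ≫ (D.εdia.app B ≫ D.δbd.app B) =
        (D.εdia.app A ≫ D.δbd.app A) ≫ D.box.map (D.dia.map f)) ∧
    (∀ {A B : C} (f : A ⟶ B),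
      D.dia.map (D.box.map f) ≫ (D.δdb.app B ≫ D.εbox.app B) =
        (D.δdb.app A ≫ D.εbox.app A) ≫ f) ∧
    (∀ A : C,
      D.dia.map (D.εdia.app A ≫ D.δbd.app A) ≫
        (D.δdb.app (D.dia.obj A) ≫ D.εbox.app (D.dia.obj A)) = 𝟙 (D.dia.obj A)) ∧
    (∀ A : C,
      (D.εdia.app (D.box.obj A) ≫ D.δbd.app (D.box.obj A)) ≫
        D.box.map (D.δdb.app A ≫ D.εbox.app A) = 𝟙 (D.box.obj A)) ∧
    ∃ adj : D.dia ⊣ D.box,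
      (∀ A : C, adj.unit.app A = D.εdia.app A ≫ D.δbd.app A) ∧
      (∀ A : C, adj.counit.app A = D.δdb.app A ≫ D.εbox.app A) := by

  have tri1 : ∀ A : C,
      D.dia.map (D.εdia.app A ≫ D.δbd.app A) ≫
        (D.δdb.app (D.dia.obj A) ≫ D.εbox.app (D.dia.obj A)) = 𝟙 (D.dia.obj A) := by
    intro A
    rw [D.dia.map_comp]
    slice_lhs 2 3 => rw [D.δI_dia A]
    slice_lhs 3 4 => rw [D.bd_beta A]
    simp [D.dia_unit_left A]
  have tri2 : ∀ A : C,
      (D.εdia.app (D.box.obj A) ≫ D.δbd.app (D.box.obj A)) ≫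
        D.box.map (D.δdb.app A ≫ D.εbox.app A) = 𝟙 (D.box.obj A) := by
    intro A
    rw [D.box.map_comp]
    slice_lhs 2 3 => rw [D.δN_box A]
    slice_lhs 1 2 => rw [D.db_beta A]
    simp [D.box_counit_left A]
  refine ⟨fun {A B} f => ?_, fun {A B} f => ?_, tri1, tri2, ?_⟩
  · have h1 := D.εdia.naturality f
    have h2 := D.δbd.naturality f
    simp only [Functor.id_map, Functor.comp_map] at h1 h2
    rw [← Category.assoc, h1, Category.assoc, h2, Category.assoc]
  · have h1 := D.δdb.naturality f
    have h2 := D.εbox.naturality f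
    simp only [Functor.id_map, Functor.comp_map] at h1 h2
    rw [← Category.assoc, h1, Category.assoc, h2, Category.assoc]
  · refine ⟨CategoryTheory.Adjunction.mkOfUnitCounit
      { unit := D.εdia ≫ D.δbd
        counit := D.δdb ≫ D.εbox
        left_triangle := ?_
        right_triangle := ?_ }, fun A => rfl, fun A => rfl⟩
    · ext A
      simpa using tri1 A
    · ext A
      simpa using tri2 A
end

section
/- In every dyad on a category C, the two 'preordering equations' are equivalent: (∀ objects A, □ε^□_A = ε^□_{□A}) if and only if (∀ objects A, ◇ε^◇_A = ε^◇_{◇A}). -/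
open CategoryTheory

universe v u

namespace DyadAux

variable {C : Type u} [Category.{v} C] (D : Dyad C)

section Forward

variable (h : ∀ A : C, D.box.map (D.εbox.app A) = D.εbox.app (D.box.obj A))

include h

/-- Under `□ε = ε□`, the counit at `◇X` is a two-sided inverse of `δ^{□◇}_X`. -/
lemma eps_bd (X : C) :
    D.εbox.app (D.dia.obj X) ≫ D.δbd.app X = 𝟙 (D.box.obj (D.dia.obj X)) := by
  have n := D.εbox.naturality (D.δbd.app X)
  simp only [Functor.id_map, Functor.id_obj, Functor.comp_obj] at n
  rw [← n, ← h, ← D.box.map_comp, D.bd_beta, D.box.map_id]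

/-- Expression of `δ^{◇□}` at `◇X`. -/
lemma ddb_dia_eq (X : C) :
    D.δdb.app (D.dia.obj X) =
      D.dia.map (D.εbox.app (D.dia.obj X)) ≫ D.δdd.app X ≫ D.δbd.app X := by
  have e := D.δI_dia X
  calc D.δdb.app (D.dia.obj X)
      = D.dia.map (D.εbox.app (D.dia.obj X) ≫ D.δbd.app X) ≫
          D.δdb.app (D.dia.obj X) := by
        rw [eps_bd D h, D.dia.map_id, Category.id_comp]
    _ = D.dia.map (D.εbox.app (D.dia.obj X)) ≫
          (D.dia.map (D.δbd.app X) ≫ D.δdb.app (D.dia.obj X)) := by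
        rw [D.dia.map_comp, Category.assoc]
    _ = D.dia.map (D.εbox.app (D.dia.obj X)) ≫ D.δdd.app X ≫ D.δbd.app X := by
        rw [e]

/-- The key "mixed" equation `(T)`. -/
lemma T_eq (X : C) :
    D.δdb.app X ≫ D.box.map (D.εdia.app X) =
      D.dia.map (D.εbox.app X) ≫ D.δbd.app X := by
  have n := D.δdb.naturality (D.εdia.app X)
  simp only [Functor.comp_map, Functor.comp_obj, Functor.id_obj, Functor.id_map] at n
  have nε := D.εbox.naturality (D.εdia.app X)
  simp only [Functor.id_map, Functor.id_obj] at nε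
  calc D.δdb.app X ≫ D.box.map (D.εdia.app X)
      = D.dia.map (D.box.map (D.εdia.app X)) ≫ D.δdb.app (D.dia.obj X) := n.symm
    _ = D.dia.map (D.box.map (D.εdia.app X)) ≫
          D.dia.map (D.εbox.app (D.dia.obj X)) ≫ D.δdd.app X ≫ D.δbd.app X := by
        rw [ddb_dia_eq D h]
    _ = D.dia.map (D.box.map (D.εdia.app X) ≫ D.εbox.app (D.dia.obj X)) ≫
          D.δdd.app X ≫ D.δbd.app X := by
        rw [D.dia.map_comp, Category.assoc]
    _ = D.dia.map (D.εbox.app X ≫ D.εdia.app X) ≫ D.δdd.app X ≫ D.δbd.app X := by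
        rw [nε]
    _ = D.dia.map (D.εbox.app X) ≫
          (D.dia.map (D.εdia.app X) ≫ D.δdd.app X) ≫ D.δbd.app X := by
        rw [D.dia.map_comp, Category.assoc, Category.assoc]
    _ = D.dia.map (D.εbox.app X) ≫ D.δbd.app X := by
        rw [D.dia_unit_left]; simp

/-- Under `□ε = ε□`, `δ^{◇◇}_A ≫ ε^◇_{◇A} = 𝟙`. -/
lemma dd_eps (A : C) :
    D.δdd.app A ≫ D.εdia.app (D.dia.obj A) = 𝟙 (D.dia.obj (D.dia.obj A)) := by
  have t := T_eq D h (D.dia.obj A)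
  rw [ddb_dia_eq D h A] at t
  -- t : (◇ε□_{◇A} ≫ δdd_A ≫ δbd_A) ≫ □ε◇_{◇A} = ◇ε□_{◇A} ≫ δbd_{◇A}
  -- cancel the iso ◇ε□_{◇A} on the left (its inverse is ◇δbd_A)
  have t2 := congrArg (fun g => D.dia.map (D.δbd.app A) ≫ g) t
  simp only [← Category.assoc, ← D.dia.map_comp, D.bd_beta, D.dia.map_id,
    Category.id_comp] at t2
  -- t2 : ((δdd_A ≫ δbd_A) ≫ □ε◇_{◇A}) = δbd_{◇A}  (up to assoc)
  have t3 := congrArg (fun g => g ≫ D.εbox.app (D.dia.obj (D.dia.obj A))) t2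
  simp only [Category.assoc] at t3
  have nε := D.εbox.naturality (D.εdia.app (D.dia.obj A))
  simp only [Functor.id_map, Functor.id_obj] at nε
  rw [nε, D.bd_beta] at t3
  -- t3 : δdd_A ≫ δbd_A ≫ ε□_{◇A} ≫ ε◇_{◇A} = 𝟙 ; collapse the middle
  rw [reassoc_of% (D.bd_beta A)] at t3
  exact t3

/-- Forward direction: `□ε = ε□` implies `◇ε = ε◇`. -/
lemma forward (A : C) :
    D.dia.map (D.εdia.app A) = D.εdia.app (D.dia.obj A) := by
  calc D.dia.map (D.εdia.app A)
      = D.dia.map (D.εdia.app A) ≫ D.δdd.app A ≫ D.εdia.app (D.dia.obj A) := by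
        rw [dd_eps D h, Category.comp_id]
    _ = (D.dia.map (D.εdia.app A) ≫ D.δdd.app A) ≫ D.εdia.app (D.dia.obj A) := by
        rw [Category.assoc]
    _ = D.εdia.app (D.dia.obj A) := by
        rw [D.dia_unit_left]; simp

end Forward

section Backward

variable (h : ∀ A : C, D.dia.map (D.εdia.app A) = D.εdia.app (D.dia.obj A))

include h

/-- Under `◇ε = ε◇`, the unit at `□X` is a two-sided inverse of `δ^{◇□}_X`. -/
lemma db_eps (X : C) :
    D.δdb.app X ≫ D.εdia.app (D.box.obj X) = 𝟙 (D.dia.obj (D.box.obj X)) := by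
  have n := D.εdia.naturality (D.δdb.app X)
  simp only [Functor.id_map, Functor.id_obj, Functor.comp_obj] at n
  rw [n, ← h, ← D.dia.map_comp, D.db_beta]
  simp

/-- Expression of `δ^{□◇}` at `□X`. -/
lemma dbd_box_eq (X : C) :
    D.δbd.app (D.box.obj X) =
      D.δdb.app X ≫ D.δbb.app X ≫ D.box.map (D.εdia.app (D.box.obj X)) := by
  have e := D.δN_box X
  calc D.δbd.app (D.box.obj X)
      = D.δbd.app (D.box.obj X) ≫
          D.box.map (D.δdb.app X ≫ D.εdia.app (D.box.obj X)) := by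
        rw [db_eps D h]
        simp
    _ = (D.δbd.app (D.box.obj X) ≫ D.box.map (D.δdb.app X)) ≫
          D.box.map (D.εdia.app (D.box.obj X)) := by
        rw [D.box.map_comp, Category.assoc]
    _ = (D.δdb.app X ≫ D.δbb.app X) ≫ D.box.map (D.εdia.app (D.box.obj X)) := by
        rw [e]
    _ = D.δdb.app X ≫ D.δbb.app X ≫ D.box.map (D.εdia.app (D.box.obj X)) := by
        rw [Category.assoc]

/-- The key "mixed" equation `(T)`, derived from the `◇` hypothesis. -/
lemma T_eq' (X : C) :
    D.dia.map (D.εbox.app X) ≫ D.δbd.app X =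
      D.δdb.app X ≫ D.box.map (D.εdia.app X) := by
  have n := D.δbd.naturality (D.εbox.app X)
  simp only [Functor.comp_map, Functor.comp_obj, Functor.id_obj, Functor.id_map] at n
  have nε := D.εdia.naturality (D.εbox.app X)
  simp only [Functor.id_map, Functor.id_obj] at nε
  calc D.dia.map (D.εbox.app X) ≫ D.δbd.app X
      = D.δbd.app (D.box.obj X) ≫ D.box.map (D.dia.map (D.εbox.app X)) := n
    _ = (D.δdb.app X ≫ D.δbb.app X ≫ D.box.map (D.εdia.app (D.box.obj X))) ≫
          D.box.map (D.dia.map (D.εbox.app X)) := by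
        rw [dbd_box_eq D h]
    _ = D.δdb.app X ≫ D.δbb.app X ≫
          D.box.map (D.εdia.app (D.box.obj X) ≫ D.dia.map (D.εbox.app X)) := by
        rw [D.box.map_comp, Category.assoc, Category.assoc]
    _ = D.δdb.app X ≫ D.δbb.app X ≫
          D.box.map (D.εbox.app X ≫ D.εdia.app X) := by
        rw [nε]
    _ = D.δdb.app X ≫ (D.δbb.app X ≫ D.box.map (D.εbox.app X)) ≫
          D.box.map (D.εdia.app X) := by
        rw [D.box.map_comp, Category.assoc]
    _ = D.δdb.app X ≫ D.box.map (D.εdia.app X) := by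
        rw [D.box_counit_left]; simp

/-- Under `◇ε = ε◇`, `ε^□_{□A} ≫ δ^{□□}_A = 𝟙`. -/
lemma eps_bb (A : C) :
    D.εbox.app (D.box.obj A) ≫ D.δbb.app A = 𝟙 (D.box.obj (D.box.obj A)) := by
  have t := T_eq' D h (D.box.obj A)
  rw [dbd_box_eq D h A] at t
  -- cancel the trailing □ε◇_{□A} by postcomposing with □δdb_A (use (◇□β))
  have t2 := congrArg (fun g => g ≫ D.box.map (D.δdb.app A)) t
  simp only [Category.assoc, ← D.box.map_comp, D.db_beta, D.box.map_id,
    Category.comp_id] at t2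
  -- t2 : ◇ε□_{□A} ≫ δdb_A ≫ δbb_A = δdb_{□A}
  have t3 := congrArg (fun g => D.εdia.app (D.box.obj (D.box.obj A)) ≫ g) t2
  rw [D.db_beta] at t3
  have nε := D.εdia.naturality (D.εbox.app (D.box.obj A))
  simp only [Functor.id_map, Functor.id_obj] at nε
  rw [← Category.assoc, ← nε, Category.assoc, reassoc_of% (D.db_beta A)] at t3
  simpa using t3

/-- Backward direction: `◇ε = ε◇` implies `□ε = ε□`. -/
lemma backward (A : C) :
    D.box.map (D.εbox.app A) = D.εbox.app (D.box.obj A) := by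
  calc D.box.map (D.εbox.app A)
      = D.εbox.app (D.box.obj A) ≫ D.δbb.app A ≫ D.box.map (D.εbox.app A) := by
        rw [← Category.assoc, eps_bb D h, Category.id_comp]
    _ = D.εbox.app (D.box.obj A) := by
        rw [D.box_counit_left]; simp

end Backward

end DyadAux

/-- In every dyad the two preordering equations are equivalent:
`(∀ A, □ε^□_A = ε^□_{□A})` iff `(∀ A, ◇ε^◇_A = ε^◇_{◇A})`. -/
theorem Dyad.preordering_equations_equiv {C : Type u} [Category.{v} C] (D : Dyad C) :
    (∀ A : C, D.box.map (D.εbox.app A) = D.εbox.app (D.box.obj A)) ↔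
    (∀ A : C, D.dia.map (D.εdia.app A) = D.εdia.app (D.dia.obj A)) := by
  exact ⟨fun h A => DyadAux.forward D h A, fun h A => DyadAux.backward D h A⟩
end

section
/- In every dyad on a category C satisfying additionally □ε^□_A = ε^□_{□A} for all objects A, one has for every object A: δ^{□◇}_A ∘ ε^□_{◇A} = id_{□◇A} and δ^{□□}_A ∘ ε^□_{□A} = id_{□□A}; consequently ε^□_{◇A} and ε^□_{□A} are isomorphisms (with inverses δ^{□◇}_A and δ^{□□}_A respectively). -/
open CategoryTheory

universe v u

/-- In a dyad satisfying `□ε^□_A = ε^□_{□A}` for all `A`, one has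
`δ^{□◇}_A ∘ ε^□_{◇A} = id_{□◇A}` and `δ^{□□}_A ∘ ε^□_{□A} = id_{□□A}`, so that
`ε^□_{◇A}` and `ε^□_{□A}` are isomorphisms (with inverses `δ^{□◇}_A` and `δ^{□□}_A`). -/
theorem Dyad.counit_iso_of_preordering {C : Type u} [Category.{v} C] (D : Dyad C)
    (h : ∀ A : C, D.box.map (D.εbox.app A) = D.εbox.app (D.box.obj A)) :
    (∀ A : C, D.εbox.app (D.dia.obj A) ≫ D.δbd.app A = 𝟙 (D.box.obj (D.dia.obj A))) ∧
    (∀ A : C, D.εbox.app (D.box.obj A) ≫ D.δbb.app A = 𝟙 (D.box.obj (D.box.obj A))) ∧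
    (∀ A : C, IsIso (D.εbox.app (D.dia.obj A))) ∧
    (∀ A : C, IsIso (D.εbox.app (D.box.obj A))) := by
  have key1 : ∀ A : C, D.εbox.app (D.dia.obj A) ≫ D.δbd.app A = 𝟙 _ := by
    intro A
    have nat := D.εbox.naturality (D.δbd.app A)
    simp only [Functor.id_map] at nat
    rw [← nat]; simp only [Functor.comp_obj]; rw [← h, ← D.box.map_comp, D.bd_beta, D.box.map_id]
  have key2 : ∀ A : C, D.εbox.app (D.box.obj A) ≫ D.δbb.app A = 𝟙 _ := by
    intro A
    have nat := D.εbox.naturality (D.δbb.app A)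
    simp only [Functor.id_map] at nat
    rw [← nat]; simp only [Functor.comp_obj]; rw [← h, ← D.box.map_comp, D.box_counit_right, D.box.map_id]
  refine ⟨key1, key2, fun A => ⟨D.δbd.app A, key1 A, D.bd_beta A⟩,
    fun A => ⟨D.δbb.app A, key2 A, D.box_counit_right A⟩⟩
end

section
/- In an entwined comonad-monad structure on a category C, if the equation (□◇) holds for all objects A, i.e., ◇□ε^◇_A ∘ ε^□_{◇□A} = ε^◇_{□◇A} ∘ □◇ε^□_A, then for all objects A both (□εχ): □◇ε^□_A = χ_A ∘ ε^□_{◇□A}, and (◇εχ): ◇□ε^◇_A = ε^◇_{□◇A} ∘ χ_A hold. -/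
open CategoryTheory

universe v u

/-- An entwined comonad-monad structure on a category `C`: a comonad
`(□, ε^□, δ^{□□})`, a monad `(◇, ε^◇, δ^{◇◇})`, and a natural transformation
`χ : ◇□ ⟶ □◇` satisfying the mixed distributive (entwining) laws.
(Composition `g ∘ f` of the paper is `f ≫ g` here.) -/
structure Entwined (C : Type u) [Category.{v} C] where
  /-- the endofunctor `□` -/
  box : C ⥤ C
  /-- the endofunctor `◇` -/
  dia : C ⥤ C
  /-- `ε^□ : □ ⟶ Id` -/
  εbox : box ⟶ 𝟭 C
  /-- `δ^{□□} : □ ⟶ □□` -/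
  δbb : box ⟶ box ⋙ box
  /-- `ε^◇ : Id ⟶ ◇` -/
  εdia : 𝟭 C ⟶ dia
  /-- `δ^{◇◇} : ◇◇ ⟶ ◇` -/
  δdd : dia ⋙ dia ⟶ dia
  /-- the entwining `χ : ◇□ ⟶ □◇` -/
  χ : box ⋙ dia ⟶ dia ⋙ box
  /-- `ε^□_{□A} ∘ δ^{□□}_A = id` -/
  box_counit_right : ∀ A : C, δbb.app A ≫ εbox.app (box.obj A) = 𝟙 (box.obj A)
  /-- `□ε^□_A ∘ δ^{□□}_A = id` -/
  box_counit_left : ∀ A : C, δbb.app A ≫ box.map (εbox.app A) = 𝟙 (box.obj A)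
  /-- `□δ^{□□}_A ∘ δ^{□□}_A = δ^{□□}_{□A} ∘ δ^{□□}_A` -/
  box_coassoc : ∀ A : C, δbb.app A ≫ box.map (δbb.app A) = δbb.app A ≫ δbb.app (box.obj A)
  /-- `δ^{◇◇}_A ∘ ε^◇_{◇A} = id` -/
  dia_unit_right : ∀ A : C, εdia.app (dia.obj A) ≫ δdd.app A = 𝟙 (dia.obj A)
  /-- `δ^{◇◇}_A ∘ ◇ε^◇_A = id` -/
  dia_unit_left : ∀ A : C, dia.map (εdia.app A) ≫ δdd.app A = 𝟙 (dia.obj A)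
  /-- `δ^{◇◇}_A ∘ ◇δ^{◇◇}_A = δ^{◇◇}_A ∘ δ^{◇◇}_{◇A}` -/
  dia_assoc : ∀ A : C, dia.map (δdd.app A) ≫ δdd.app A = δdd.app (dia.obj A) ≫ δdd.app A
  /-- `(ε^□χ)`: `ε^□_{◇A} ∘ χ_A = ◇ε^□_A` -/
  εbox_χ : ∀ A : C, χ.app A ≫ εbox.app (dia.obj A) = dia.map (εbox.app A)
  /-- `(ε^◇χ)`: `χ_A ∘ ε^◇_{□A} = □ε^◇_A` -/
  εdia_χ : ∀ A : C, εdia.app (box.obj A) ≫ χ.app A = box.map (εdia.app A)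
  /-- `(δ^{□□}χ)`: `δ^{□□}_{◇A} ∘ χ_A = □χ_A ∘ χ_{□A} ∘ ◇δ^{□□}_A` -/
  δbb_χ : ∀ A : C, χ.app A ≫ δbb.app (dia.obj A) =
      dia.map (δbb.app A) ≫ χ.app (box.obj A) ≫ box.map (χ.app A)
  /-- `(δ^{◇◇}χ)`: `χ_A ∘ δ^{◇◇}_{□A} = □δ^{◇◇}_A ∘ χ_{◇A} ∘ ◇χ_A` -/
  δdd_χ : ∀ A : C, δdd.app (box.obj A) ≫ χ.app A =
      dia.map (χ.app A) ≫ χ.app (dia.obj A) ≫ box.map (δdd.app A)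

/-- If `(□◇)`: `◇□ε^◇_A ∘ ε^□_{◇□A} = ε^◇_{□◇A} ∘ □◇ε^□_A` holds for all `A`, then
both `(□εχ)`: `□◇ε^□_A = χ_A ∘ ε^□_{◇□A}` and `(◇εχ)`: `◇□ε^◇_A = ε^◇_{□◇A} ∘ χ_A`
hold for all `A`. -/
theorem Entwined.chi_eqs_of_boxdia {C : Type u} [Category.{v} C] (E : Entwined C)
    (h : ∀ A : C,
      E.εbox.app (E.dia.obj (E.box.obj A)) ≫ E.dia.map (E.box.map (E.εdia.app A)) =
        E.box.map (E.dia.map (E.εbox.app A)) ≫ E.εdia.app (E.box.obj (E.dia.obj A))) :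
    (∀ A : C,
      E.box.map (E.dia.map (E.εbox.app A)) =
        E.εbox.app (E.dia.obj (E.box.obj A)) ≫ E.χ.app A) ∧
    (∀ A : C,
      E.dia.map (E.box.map (E.εdia.app A)) =
        E.χ.app A ≫ E.εdia.app (E.box.obj (E.dia.obj A))) := by
  have key1 : ∀ A : C, E.χ.app A =
      E.dia.map (E.box.map (E.εdia.app A)) ≫ E.χ.app (E.dia.obj A) ≫
        E.box.map (E.δdd.app A) := by
    intro A
    calc E.χ.app A
        = (E.dia.map (E.εdia.app (E.box.obj A)) ≫ E.δdd.app (E.box.obj A)) ≫ E.χ.app A := by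
          rw [E.dia_unit_left]; simp
      _ = E.dia.map (E.εdia.app (E.box.obj A)) ≫ E.dia.map (E.χ.app A) ≫
            E.χ.app (E.dia.obj A) ≫ E.box.map (E.δdd.app A) := by
          rw [Category.assoc, E.δdd_χ]
      _ = E.dia.map (E.εdia.app (E.box.obj A) ≫ E.χ.app A) ≫
            E.χ.app (E.dia.obj A) ≫ E.box.map (E.δdd.app A) := by
          rw [Functor.map_comp, Category.assoc]
      _ = E.dia.map (E.box.map (E.εdia.app A)) ≫ E.χ.app (E.dia.obj A) ≫
            E.box.map (E.δdd.app A) := by rw [E.εdia_χ]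
  have key2 : ∀ A : C, E.χ.app A =
      E.dia.map (E.δbb.app A) ≫ E.χ.app (E.box.obj A) ≫
        E.box.map (E.dia.map (E.εbox.app A)) := by
    intro A
    calc E.χ.app A
        = E.χ.app A ≫ E.δbb.app (E.dia.obj A) ≫ E.box.map (E.εbox.app (E.dia.obj A)) := by
          rw [E.box_counit_left]; simp
      _ = (E.dia.map (E.δbb.app A) ≫ E.χ.app (E.box.obj A) ≫ E.box.map (E.χ.app A)) ≫
            E.box.map (E.εbox.app (E.dia.obj A)) := by
          rw [← Category.assoc, E.δbb_χ]
      _ = E.dia.map (E.δbb.app A) ≫ E.χ.app (E.box.obj A) ≫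
            E.box.map (E.χ.app A ≫ E.εbox.app (E.dia.obj A)) := by
          simp [Functor.map_comp]
      _ = E.dia.map (E.δbb.app A) ≫ E.χ.app (E.box.obj A) ≫
            E.box.map (E.dia.map (E.εbox.app A)) := by rw [E.εbox_χ]
  constructor
  · intro A
    symm
    calc E.εbox.app (E.dia.obj (E.box.obj A)) ≫ E.χ.app A
        = (E.εbox.app (E.dia.obj (E.box.obj A)) ≫ E.dia.map (E.box.map (E.εdia.app A))) ≫
            E.χ.app (E.dia.obj A) ≫ E.box.map (E.δdd.app A) := by
          rw [key1 A, Category.assoc]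
      _ = E.box.map (E.dia.map (E.εbox.app A)) ≫ E.εdia.app (E.box.obj (E.dia.obj A)) ≫
            E.χ.app (E.dia.obj A) ≫ E.box.map (E.δdd.app A) := by
          rw [h A, Category.assoc]
      _ = E.box.map (E.dia.map (E.εbox.app A)) ≫ E.box.map (E.εdia.app (E.dia.obj A)) ≫
            E.box.map (E.δdd.app A) := by
          rw [← Category.assoc (E.εdia.app _), E.εdia_χ (E.dia.obj A)]
      _ = E.box.map (E.dia.map (E.εbox.app A)) := by
          rw [← Functor.map_comp, E.dia_unit_right]; simp
  · intro A
    symm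
    calc E.χ.app A ≫ E.εdia.app (E.box.obj (E.dia.obj A))
        = E.dia.map (E.δbb.app A) ≫ E.χ.app (E.box.obj A) ≫
            E.box.map (E.dia.map (E.εbox.app A)) ≫ E.εdia.app (E.box.obj (E.dia.obj A)) := by
          rw [key2 A]; simp only [Category.assoc]
      _ = E.dia.map (E.δbb.app A) ≫ E.χ.app (E.box.obj A) ≫
            E.εbox.app (E.dia.obj (E.box.obj A)) ≫ E.dia.map (E.box.map (E.εdia.app A)) := by
          rw [h A]
      _ = E.dia.map (E.δbb.app A) ≫ E.dia.map (E.εbox.app (E.box.obj A)) ≫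
            E.dia.map (E.box.map (E.εdia.app A)) := by
          rw [← Category.assoc (E.χ.app _), E.εbox_χ (E.box.obj A)]
      _ = E.dia.map (E.box.map (E.εdia.app A)) := by
          rw [← Category.assoc, ← Functor.map_comp, E.box_counit_right]; simp
end

section
/- In an entwined comonad-monad structure on a category C: if (□εχ): □◇ε^□_A = χ_A ∘ ε^□_{◇□A} holds for all objects A, then (□εχδ): χ_{□A} ∘ ◇δ^{□□}_A ∘ ε^□_{◇□A} = id_{□◇□A} holds for all A; and dually, if (◇εχ): ◇□ε^◇_A = ε^◇_{□◇A} ∘ χ_A holds for all A, then (◇εχδ): ε^◇_{□◇A} ∘ □δ^{◇◇}_A ∘ χ_{◇A} = id_{◇□◇A} holds for all A. -/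
open CategoryTheory

universe v u

/-- If `(□εχ)` holds for all `A` then `(□εχδ)`:
`χ_{□A} ∘ ◇δ^{□□}_A ∘ ε^□_{◇□A} = id_{□◇□A}` holds for all `A`; dually, if `(◇εχ)`
holds for all `A` then `(◇εχδ)`:
`ε^◇_{□◇A} ∘ □δ^{◇◇}_A ∘ χ_{◇A} = id_{◇□◇A}` holds for all `A`. -/
theorem Entwined.chi_delta_eqs {C : Type u} [Category.{v} C] (E : Entwined C) :
    ((∀ A : C,
        E.box.map (E.dia.map (E.εbox.app A)) =
          E.εbox.app (E.dia.obj (E.box.obj A)) ≫ E.χ.app A) →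
      ∀ A : C,
        E.εbox.app (E.dia.obj (E.box.obj A)) ≫ E.dia.map (E.δbb.app A) ≫
          E.χ.app (E.box.obj A) = 𝟙 (E.box.obj (E.dia.obj (E.box.obj A)))) ∧
    ((∀ A : C,
        E.dia.map (E.box.map (E.εdia.app A)) =
          E.χ.app A ≫ E.εdia.app (E.box.obj (E.dia.obj A))) →
      ∀ A : C,
        E.χ.app (E.dia.obj A) ≫ E.box.map (E.δdd.app A) ≫
          E.εdia.app (E.box.obj (E.dia.obj A)) = 𝟙 (E.dia.obj (E.box.obj (E.dia.obj A)))) := by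
  constructor
  · intro h A
    have nat : E.εbox.app (E.dia.obj (E.box.obj A)) ≫ E.dia.map (E.δbb.app A) =
        E.box.map (E.dia.map (E.δbb.app A)) ≫
          E.εbox.app (E.dia.obj (E.box.obj (E.box.obj A))) := by
      simpa using (E.εbox.naturality (E.dia.map (E.δbb.app A))).symm
    calc E.εbox.app (E.dia.obj (E.box.obj A)) ≫ E.dia.map (E.δbb.app A) ≫
            E.χ.app (E.box.obj A)
        = (E.εbox.app (E.dia.obj (E.box.obj A)) ≫ E.dia.map (E.δbb.app A)) ≫
            E.χ.app (E.box.obj A) := by rw [Category.assoc]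
      _ = E.box.map (E.dia.map (E.δbb.app A)) ≫
            (E.εbox.app (E.dia.obj (E.box.obj (E.box.obj A))) ≫
              E.χ.app (E.box.obj A)) := by rw [nat, Category.assoc]
      _ = E.box.map (E.dia.map (E.δbb.app A)) ≫
            E.box.map (E.dia.map (E.εbox.app (E.box.obj A))) := by rw [← h (E.box.obj A)]
      _ = E.box.map (E.dia.map (E.δbb.app A ≫ E.εbox.app (E.box.obj A))) := by
            rw [← E.box.map_comp, ← E.dia.map_comp]
      _ = 𝟙 _ := by rw [E.box_counit_right, E.dia.map_id, E.box.map_id]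
  · intro h A
    have nat : E.box.map (E.δdd.app A) ≫ E.εdia.app (E.box.obj (E.dia.obj A)) =
        E.εdia.app (E.box.obj (E.dia.obj (E.dia.obj A))) ≫
          E.dia.map (E.box.map (E.δdd.app A)) := by
      simpa using (E.εdia.naturality (E.box.map (E.δdd.app A)))
    calc E.χ.app (E.dia.obj A) ≫ E.box.map (E.δdd.app A) ≫
            E.εdia.app (E.box.obj (E.dia.obj A))
        = (E.χ.app (E.dia.obj A) ≫ E.εdia.app (E.box.obj (E.dia.obj (E.dia.obj A)))) ≫
            E.dia.map (E.box.map (E.δdd.app A)) := by rw [nat, ← Category.assoc]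
      _ = E.dia.map (E.box.map (E.εdia.app (E.dia.obj A))) ≫
            E.dia.map (E.box.map (E.δdd.app A)) := by rw [← h (E.dia.obj A)]
      _ = E.dia.map (E.box.map (E.εdia.app (E.dia.obj A) ≫ E.δdd.app A)) := by
            rw [← E.dia.map_comp, ← E.box.map_comp]
      _ = 𝟙 _ := by simp [E.dia_unit_right]
end

section
/- Every trijunction gives rise to a dyad: given categories A and B, a functor U : A ⥤ B, functors L, R : B ⥤ A, an adjunction L ⊣ U with unit γ^L : Id_B ⟶ L⋙U and counit φ^L : U⋙L ⟶ Id_A, and an adjunction U ⊣ R with unit γ^R : Id_A ⟶ U⋙R and counit φ^R : R⋙U ⟶ Id_B, define the endofunctors □ = R⋙U and ◇ = L⋙U of B and the components ε^□_B := φ^R_B, δ^{□□}_B := U(γ^R_{R B}), ε^◇_B := γ^L_B, δ^{◇◇}_B := U(φ^L_{L B}), δ^{□◇}_B := U(γ^R_{L B}), δ^{◇□}_B := U(φ^L_{R B}). Then these data satisfy all the dyad equations: the comonad laws for (□, ε^□, δ^{□□}), the monad laws for (◇, ε^◇, δ^{◇◇}), and for every object B and for M either of □, ◇: (□◇β) ε^□_{◇B}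 ∘ δ^{□◇}_B = id_{◇B}; (◇□β) δ^{◇□}_B ∘ ε^◇_{□B} = id_{□B}; (δN) □δ^{◇M}_B ∘ δ^{□◇}_{M B} = δ^{□M}_B ∘ δ^{◇M}_B; (δI) δ^{◇□}_{M B} ∘ ◇δ^{□M}_B = δ^{□M}_B ∘ δ^{◇M}_B. -/
open CategoryTheory

universe v₁ v₂ u₁ u₂

/-- Every trijunction `(L ⊣ U, U ⊣ R)` gives rise to a dyad on `B` with `□ = UR`,
`◇ = UL`, `ε^□ = φ^R`, `δ^{□□}_X = U(γ^R_{R X})`, `ε^◇ = γ^L`,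
`δ^{◇◇}_X = U(φ^L_{L X})`, `δ^{□◇}_X = U(γ^R_{L X})`, `δ^{◇□}_X = U(φ^L_{R X})`:
all the dyad equations hold (comonad laws, monad laws, (□◇β), (◇□β), (δN) and (δI)
for `M` each of `□`, `◇`).  (Composition `g ∘ f` of the paper is `f ≫ g` here.) -/
theorem trijunction_gives_dyad
    {A : Type u₁} [Category.{v₁} A] {B : Type u₂} [Category.{v₂} B]
    (U : A ⥤ B) (L R : B ⥤ A) (adjL : L ⊣ U) (adjR : U ⊣ R) :
    -- comonad laws for (□, ε^□, δ^{□□})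
    (∀ X : B, U.map (adjR.unit.app (R.obj X)) ≫ adjR.counit.app (U.obj (R.obj X)) =
        𝟙 (U.obj (R.obj X))) ∧
    (∀ X : B, U.map (adjR.unit.app (R.obj X)) ≫ U.map (R.map (adjR.counit.app X)) =
        𝟙 (U.obj (R.obj X))) ∧
    (∀ X : B, U.map (adjR.unit.app (R.obj X)) ≫ U.map (R.map (U.map (adjR.unit.app (R.obj X)))) =
        U.map (adjR.unit.app (R.obj X)) ≫ U.map (adjR.unit.app (R.obj (U.obj (R.obj X))))) ∧
    -- monad laws for (◇, ε^◇, δ^{◇◇})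
    (∀ X : B, adjL.unit.app (U.obj (L.obj X)) ≫ U.map (adjL.counit.app (L.obj X)) =
        𝟙 (U.obj (L.obj X))) ∧
    (∀ X : B, U.map (L.map (adjL.unit.app X)) ≫ U.map (adjL.counit.app (L.obj X)) =
        𝟙 (U.obj (L.obj X))) ∧
    (∀ X : B, U.map (L.map (U.map (adjL.counit.app (L.obj X)))) ≫ U.map (adjL.counit.app (L.obj X)) =
        U.map (adjL.counit.app (L.obj (U.obj (L.obj X)))) ≫ U.map (adjL.counit.app (L.obj X))) ∧
    -- (□◇β): ε^□_{◇X} ∘ δ^{□◇}_X = id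
    (∀ X : B, U.map (adjR.unit.app (L.obj X)) ≫ adjR.counit.app (U.obj (L.obj X)) =
        𝟙 (U.obj (L.obj X))) ∧
    -- (◇□β): δ^{◇□}_X ∘ ε^◇_{□X} = id
    (∀ X : B, adjL.unit.app (U.obj (R.obj X)) ≫ U.map (adjL.counit.app (R.obj X)) =
        𝟙 (U.obj (R.obj X))) ∧
    -- (δN) for M = □: □δ^{◇□}_X ∘ δ^{□◇}_{□X} = δ^{□□}_X ∘ δ^{◇□}_X
    (∀ X : B, U.map (adjR.unit.app (L.obj (U.obj (R.obj X)))) ≫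
        U.map (R.map (U.map (adjL.counit.app (R.obj X)))) =
        U.map (adjL.counit.app (R.obj X)) ≫ U.map (adjR.unit.app (R.obj X))) ∧
    -- (δN) for M = ◇: □δ^{◇◇}_X ∘ δ^{□◇}_{◇X} = δ^{□◇}_X ∘ δ^{◇◇}_X
    (∀ X : B, U.map (adjR.unit.app (L.obj (U.obj (L.obj X)))) ≫
        U.map (R.map (U.map (adjL.counit.app (L.obj X)))) =
        U.map (adjL.counit.app (L.obj X)) ≫ U.map (adjR.unit.app (L.obj X))) ∧
    -- (δI) for M = □: δ^{◇□}_{□X} ∘ ◇δ^{□□}_X = δ^{□□}_X ∘ δ^{◇□}_X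
    (∀ X : B, U.map (L.map (U.map (adjR.unit.app (R.obj X)))) ≫
        U.map (adjL.counit.app (R.obj (U.obj (R.obj X)))) =
        U.map (adjL.counit.app (R.obj X)) ≫ U.map (adjR.unit.app (R.obj X))) ∧
    -- (δI) for M = ◇: δ^{◇□}_{◇X} ∘ ◇δ^{□◇}_X = δ^{□◇}_X ∘ δ^{◇◇}_X
    (∀ X : B, U.map (L.map (U.map (adjR.unit.app (L.obj X)))) ≫
        U.map (adjL.counit.app (R.obj (U.obj (L.obj X)))) =
        U.map (adjL.counit.app (L.obj X)) ≫ U.map (adjR.unit.app (L.obj X))) := by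
  and_intros <;> intro X <;>
    simp [← Functor.map_comp, Adjunction.left_triangle_components,
      Adjunction.right_triangle_components, ← Adjunction.unit_naturality,
      ← Adjunction.counit_naturality] <;>
    rw [Adjunction.counit_naturality, Adjunction.unit_naturality]
end

section
/- Every dyad arises from a trijunction (Eilenberg–Moore-type construction): for every dyad on a category C, with endofunctors □ and ◇ and natural transformations ε^□, δ^{□□}, ε^◇, δ^{◇◇}, δ^{□◇}, δ^{◇□} as in the definition of a dyad, there exist a category D, a functor U : D ⥤ C, functors L, R : C ⥤ D, an adjunction adjL : L ⊣ U and an adjunction adjR : U ⊣ R such that L⋙U = ◇ and R⋙U = □ as endofunctors of C, and for every object A of C: adjR.counit at A equals ε^□_A, adjL.unit at A equals ε^◇_A, U applied to the component of adjR's unit at R A equals δ^{□□}_A, U applied to the component of adjL's counit at L A equals δ^{◇◇}_A, U applied to the component of adjR's unit at L A equals δ^{□◇}_A, and U applied to the component of adjL's counit at R A equals δ^{◇□}_A. -/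
open CategoryTheory

universe v u

/-!
The trijunction lives on the Eilenberg–Moore category of the monad `◇`, with `L ⊣ U` the
free–forgetful adjunction. By (◇□β), and associativity obtained from (δI) and (δN), each
`(□A, δ^{◇□}_A)` is a `◇`-algebra; this is `R A`. For an algebra `a : ◇X ⟶ X` the map
`□a ∘ δ^{□◇}_X ∘ ε^◇_X : X ⟶ □X` is an algebra morphism natural in `X`; it is the unit of
`U ⊣ R`, whose counit is `ε^□`. On free algebras and on the algebras `R A` this unit reduces,
via (δN) and the unit laws, to `δ^{□◇}` and `δ^{□□}`.
-/

namespace Dyad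

open Category

variable {C : Type u} [Category.{v} C] (D : Dyad C)

abbrev diaMonad : Monad C where
  toFunctor := D.dia
  η := D.εdia
  μ := D.δdd
  assoc := D.dia_assoc
  left_unit := D.dia_unit_right
  right_unit := D.dia_unit_left

lemma dia_map_δdb_comp_δdb (A : C) :
    D.dia.map (D.δdb.app A) ≫ D.δdb.app A = D.δdd.app (D.box.obj A) ≫ D.δdb.app A := by
  have hnat : D.dia.map (D.box.map (D.δdb.app A)) ≫ D.δdb.app (D.box.obj A) =
      D.δdb.app (D.dia.obj (D.box.obj A)) ≫ D.box.map (D.δdb.app A) :=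
    D.δdb.naturality (D.δdb.app A)
  -- `δ^{□□}_A` is split by `ε^□_{□A}`, so it suffices to compare both sides followed by it.
  suffices h : (D.dia.map (D.δdb.app A) ≫ D.δdb.app A) ≫ D.δbb.app A =
      (D.δdd.app (D.box.obj A) ≫ D.δdb.app A) ≫ D.δbb.app A by
    simpa [D.box_counit_right] using h =≫ D.εbox.app (D.box.obj A)
  calc (D.dia.map (D.δdb.app A) ≫ D.δdb.app A) ≫ D.δbb.app A
      = D.dia.map (D.δdb.app A ≫ D.δbb.app A) ≫ D.δdb.app (D.box.obj A) := by
        rw [Functor.map_comp_assoc, D.δI_box, assoc]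
    _ = D.dia.map (D.δbd.app (D.box.obj A)) ≫ D.δdb.app (D.dia.obj (D.box.obj A)) ≫
          D.box.map (D.δdb.app A) := by
        rw [← D.δN_box, Functor.map_comp_assoc, hnat]
    _ = (D.δdd.app (D.box.obj A) ≫ D.δdb.app A) ≫ D.δbb.app A := by
        rw [← assoc, D.δI_dia, assoc, D.δN_box, assoc]

def cofree : C ⥤ D.diaMonad.Algebra where
  obj A :=
    { A := D.box.obj A
      a := D.δdb.app A
      unit := D.db_beta A
      assoc := (D.dia_map_δdb_comp_δdb A).symm }
  map f :=
    { f := D.box.map f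
      h := D.δdb.naturality f }

def toBox (X : D.diaMonad.Algebra) : X.A ⟶ D.box.obj X.A :=
  D.εdia.app X.A ≫ D.δbd.app X.A ≫ D.box.map X.a

lemma comp_toBox {X Y : D.diaMonad.Algebra} (g : X ⟶ Y) :
    g.f ≫ D.toBox Y = D.toBox X ≫ D.box.map g.f := by
  have hg : D.dia.map g.f ≫ Y.a = X.a ≫ g.f := g.h
  have hεdia : g.f ≫ D.εdia.app Y.A = D.εdia.app X.A ≫ D.dia.map g.f := D.εdia.naturality g.f
  have hδbd : D.dia.map g.f ≫ D.δbd.app Y.A = D.δbd.app X.A ≫ D.box.map (D.dia.map g.f) :=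
    D.δbd.naturality g.f
  rw [toBox, toBox, reassoc_of% hεdia, reassoc_of% hδbd, ← Functor.map_comp, hg,
    Functor.map_comp, assoc, assoc]

lemma toBox_free (A : C) : D.toBox (D.diaMonad.free.obj A) = D.δbd.app A := by
  change D.εdia.app _ ≫ D.δbd.app (D.dia.obj A) ≫ D.box.map (D.δdd.app A) = _
  rw [D.δN_dia, reassoc_of% D.dia_unit_right]

lemma toBox_cofree (A : C) : D.toBox (D.cofree.obj A) = D.δbb.app A := by
  change D.εdia.app _ ≫ D.δbd.app (D.box.obj A) ≫ D.box.map (D.δdb.app A) = _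
  rw [D.δN_box, reassoc_of% D.db_beta]

lemma toBox_comp_εbox (X : D.diaMonad.Algebra) : D.toBox X ≫ D.εbox.app X.A = 𝟙 X.A := by
  have hε : D.box.map X.a ≫ D.εbox.app X.A = D.εbox.app (D.dia.obj X.A) ≫ X.a :=
    D.εbox.naturality X.a
  have hunit : D.εdia.app X.A ≫ X.a = 𝟙 X.A := X.unit
  rw [toBox, assoc, assoc, hε, reassoc_of% D.bd_beta, hunit]

lemma a_comp_toBox (X : D.diaMonad.Algebra) :
    X.a ≫ D.toBox X = D.δbd.app X.A ≫ D.box.map X.a := by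
  -- `X.a` is itself an algebra morphism from the free algebra on `X.A` to `X`.
  have h := D.comp_toBox (X := D.diaMonad.free.obj X.A) ⟨X.a, X.assoc.symm⟩
  rw [toBox_free] at h
  exact h

lemma dia_map_toBox_comp_δdb (X : D.diaMonad.Algebra) :
    D.dia.map (D.toBox X) ≫ D.δdb.app X.A = D.δbd.app X.A ≫ D.box.map X.a := by
  have hδdb : D.dia.map (D.box.map X.a) ≫ D.δdb.app X.A =
      D.δdb.app (D.dia.obj X.A) ≫ D.box.map X.a := D.δdb.naturality X.a
  rw [toBox, Functor.map_comp, Functor.map_comp, assoc, assoc, hδdb, reassoc_of% D.δI_dia,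
    reassoc_of% D.dia_unit_left]

def toCofree (X : D.diaMonad.Algebra) : X ⟶ D.cofree.obj X.A where
  f := D.toBox X
  h := (D.dia_map_toBox_comp_δdb X).trans (D.a_comp_toBox X).symm

def forgetAdjCofree : D.diaMonad.forget ⊣ D.cofree where
  unit :=
    { app := D.toCofree
      naturality _ _ g := by ext; exact D.comp_toBox g }
  counit := D.εbox
  left_triangle_components := D.toBox_comp_εbox
  right_triangle_components A := by
    ext
    change D.toBox (D.cofree.obj A) ≫ D.box.map (D.εbox.app A) = 𝟙 _
    rw [toBox_cofree]
    exact D.box_counit_left A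

end Dyad

/-- Every dyad arises from a trijunction (Eilenberg–Moore-type construction): there
are a category `E`, a functor `U : E ⥤ C` and functors `L R : C ⥤ E` with
adjunctions `L ⊣ U` and `U ⊣ R` such that `L ⋙ U = ◇` and `R ⋙ U = □`, the counit
of `U ⊣ R` is `ε^□`, the unit of `L ⊣ U` is `ε^◇`, and `U` applied to the
appropriate unit/counit components gives `δ^{□□}`, `δ^{◇◇}`, `δ^{□◇}`, `δ^{◇□}`. -/
theorem Dyad.arises_from_trijunction {C : Type u} [Category.{v} C] (D : Dyad C) :
    ∃ (E : Type (max u v)) (_ : Category.{v} E) (U : E ⥤ C) (L R : C ⥤ E)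
      (adjL : L ⊣ U) (adjR : U ⊣ R),
      L ⋙ U = D.dia ∧ R ⋙ U = D.box ∧
      (∀ A : C, HEq (adjR.counit.app A) (D.εbox.app A)) ∧
      (∀ A : C, HEq (adjL.unit.app A) (D.εdia.app A)) ∧
      (∀ A : C, HEq (U.map (adjR.unit.app (R.obj A))) (D.δbb.app A)) ∧
      (∀ A : C, HEq (U.map (adjL.counit.app (L.obj A))) (D.δdd.app A)) ∧
      (∀ A : C, HEq (U.map (adjR.unit.app (L.obj A))) (D.δbd.app A)) ∧
      (∀ A : C, HEq (U.map (adjL.counit.app (R.obj A))) (D.δdb.app A)) :=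
  ⟨D.diaMonad.Algebra, inferInstance, D.diaMonad.forget, D.diaMonad.free, D.cofree,
    D.diaMonad.adj, D.forgetAdjCofree, rfl, rfl,
    fun _ => HEq.rfl,
    fun _ => heq_of_eq (Category.comp_id _),
    fun A => heq_of_eq (D.toBox_cofree A),
    fun _ => heq_of_eq (by rw [Monad.adj_counit]; rfl),
    fun A => heq_of_eq (D.toBox_free A),
    fun _ => heq_of_eq (by rw [Monad.adj_counit]; rfl)⟩
end
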